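/- In any LTS, if q̂ ⟶^◇ q̌ then every sequence that is a complete interleaving of ◇ (i.e., s ⊏− ◇ with |s| = |◇|) is a trace from q̂ ending in q̌: q̂ →^s q̌. -/
import Mathlib


/-- A sequence is non-monotone if it contains at least two distinct actions. -/
def NonMono {A : Type*} [DecidableEq A] (s : List A) : Prop := 2 ≤ s.toFinset.card

/-- A diamond pattern: finitely supported cardinality maps on actions and on
non-monotone action sequences. -/
structure Diamond (A : Type*) [DecidableEq A] where
  Ca : A →₀ ℕ
  Cs : List A →₀ ℕ
  nonmono : ∀ s ∈ Cs.support, NonMono s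

namespace Diamond

variable {A : Type*} [DecidableEq A]

/-- The empty diamond. -/
def emptyD : Diamond A := ⟨0, 0, by simp⟩

/-- The size of a diamond. -/
def size (d : Diamond A) : ℕ :=
  d.Ca.sum (fun _ n => n) + d.Cs.sum (fun s n => s.length * n)

/-- The head actions of a diamond. -/
def hdSet (d : Diamond A) : Set A :=
  {a | 0 < d.Ca a ∨ ∃ s : List A, 0 < d.Cs s ∧ s.head? = some a}

/-- Single-action tail operation on diamonds. -/
def tl (d : Diamond A) (a : A) : Set (Diamond A) :=
  {d' |
    (0 < d.Ca a ∧ d'.Ca = d.Ca.update a (d.Ca a - 1) ∧ d'.Cs = d.Cs)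
    ∨ (∃ s : List A, NonMono s ∧ 0 < d.Cs (a :: s) ∧ d'.Ca = d.Ca ∧
        d'.Cs = (d.Cs.update (a :: s) (d.Cs (a :: s) - 1)).update s (d.Cs s + 1))
    ∨ (∃ (b : A) (k : ℕ), 0 < k ∧ b ≠ a ∧ 0 < d.Cs (a :: List.replicate k b) ∧
        d'.Ca = d.Ca.update b (d.Ca b + k) ∧
        d'.Cs = d.Cs.update (a :: List.replicate k b) (d.Cs (a :: List.replicate k b) - 1))}

/-- Tail operation iterated over an action sequence. -/
def tlSeq (d : Diamond A) : List A → Set (Diamond A)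
  | [] => {d}
  | a :: s => ⋃ d' ∈ tl d a, tlSeq d' s

/-- `TlD d dpf r` : `r` is in the diamond-tail `tl(d, dpf)`. -/
inductive TlD : Diamond A → Diamond A → Diamond A → Prop
  | empty (d : Diamond A) : TlD d emptyD d
  | step {d dpf r : Diamond A} {a : A} {d' dpf' : Diamond A} :
      a ∈ hdSet dpf → d' ∈ tl d a → dpf' ∈ tl dpf a → TlD d' dpf' r → TlD d dpf r

/-- The prefix relation on diamonds: `dpf ⊑ d` iff `tl(d, dpf) ≠ ∅`. -/
def Prefix (dpf d : Diamond A) : Prop := ∃ r, TlD d dpf r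

/-- Sequence-of relation: `s` is an interleaving prefix of the diamond `d`. -/
inductive SeqOf : List A → Diamond A → Prop
  | nil (d : Diamond A) : SeqOf [] d
  | cons {a : A} {s : List A} {d d' : Diamond A} :
      d' ∈ tl d a → SeqOf s d' → SeqOf (a :: s) d

/-- The singleton diamond `a¹`. -/
noncomputable def singleD (a : A) : Diamond A := ⟨Finsupp.single a 1, 0, by simp⟩

end Diamond

section LTS

variable {Q A : Type*} [DecidableEq A]

/-- Transition relation extended to action sequences. -/
inductive TrSeq (Tr : Q → A → Q → Prop) : Q → List A → Q → Prop
  | nil (q : Q) : TrSeq Tr q [] q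
  | cons {q q' q'' : Q} {a : A} {s : List A} :
      Tr q a q' → TrSeq Tr q' s q'' → TrSeq Tr q (a :: s) q''

open Diamond in
/-- Fuel-indexed strict diamond convergence (the fuel is the diamond size;
every tail step decreases the size by exactly one). -/
def SConvF (Tr : Q → A → Q → Prop) (R : Q → Q → Prop) :
    ℕ → Diamond A → Q → Q → Prop
  | 0, d, q, q' => d = emptyD ∧ R q q'
  | n + 1, d, q, q' =>
    (d = emptyD ∧ R q q') ∨
    (d ≠ emptyD ∧
      (∀ a ∈ hdSet d, ∀ d' ∈ tl d a, ∃ p, Tr q a p ∧ SConvF Tr R n d' p q') ∧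
      (∀ (a : A) (p : Q), Tr q a p → ∃ d' ∈ tl d a, SConvF Tr R n d' p q'))

/-- Strict diamond convergence up to `R`: `SConv Tr R d q̂ q̌` means
`q̂ ⟹^d [q̌]_R`. -/
def SConv (Tr : Q → A → Q → Prop) (R : Q → Q → Prop)
    (d : Diamond A) (q q' : Q) : Prop :=
  SConvF Tr R d.size d q q'

open Diamond in
/-- (Non-strict) diamond convergence up to `R`: `Conv Tr R d q̂ q̌` means
`q̂ ⟶^d [q̌]_R`. -/
def Conv (Tr : Q → A → Q → Prop) (R : Q → Q → Prop)
    (d : Diamond A) (q q' : Q) : Prop :=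
  (d = emptyD ∧ R q q') ∨
  (d ≠ emptyD ∧ ∀ a ∈ hdSet d, ∀ d' ∈ tl d a, ∃ p, Tr q a p ∧ SConv Tr R d' p q')

end LTS


namespace Diamond

variable {A : Type*} [DecidableEq A]

lemma sum_add_single_card {α : Type*} [DecidableEq α] {f g : α →₀ ℕ} {x : α} {m : ℕ}
    (hfg : f = g + Finsupp.single x m) :
    f.sum (fun _ n => n) = g.sum (fun _ n => n) + m := by
  subst hfg
  rw [Finsupp.sum_add_index' (fun a => rfl) (fun a b c => rfl),
    Finsupp.sum_single_index rfl]

lemma sum_add_single_len {f g : List A →₀ ℕ} {x : List A} {m : ℕ}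
    (hfg : f = g + Finsupp.single x m) :
    f.sum (fun s n => s.length * n) = g.sum (fun s n => s.length * n) + x.length * m := by
  subst hfg
  rw [Finsupp.sum_add_index' (fun a => by simp) (fun a b c => by ring),
    Finsupp.sum_single_index (by simp)]

lemma size_emptyD : size (emptyD : Diamond A) = 0 := by
  simp [size, emptyD]

lemma eq_emptyD_of_size_eq_zero {d : Diamond A} (h : size d = 0) : d = emptyD := by
  rcases d with ⟨Ca, Cs, hnm⟩
  have h1 : Ca.sum (fun _ n => n) = 0 := by
    have := Nat.eq_zero_of_add_eq_zero_right h; simpa [size] using this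
  have h2 : Cs.sum (fun s n => s.length * n) = 0 := by
    have := Nat.eq_zero_of_add_eq_zero_left h; simpa [size] using this
  have hCa : Ca = 0 := by
    ext a
    by_cases ha : a ∈ Ca.support
    · have := Finset.sum_eq_zero_iff.mp h1 a ha
      simpa using this
    · simpa using Finsupp.notMem_support_iff.mp ha
  have hCs : Cs = 0 := by
    ext s
    by_cases hs : s ∈ Cs.support
    · have hz := Finset.sum_eq_zero_iff.mp h2 s hs
      rcases Nat.mul_eq_zero.mp hz with hl | hv
      · exfalso
        have hn := hnm s hs
        have : s = [] := List.length_eq_zero_iff.mp hl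
        subst this
        simp [NonMono] at hn
      · exact hv
    · simpa using Finsupp.notMem_support_iff.mp hs
  subst hCa; subst hCs; rfl

lemma size_tl {d d' : Diamond A} {a : A} (h : d' ∈ tl d a) :
    size d = size d' + 1 := by
  rcases h with ⟨ha, hCa, hCs⟩ | ⟨s, hnm, hpos, hCa, hCs⟩ | ⟨b, k, hk, hba, hpos, hCa, hCs⟩
  · have key : d.Ca = d'.Ca + Finsupp.single a 1 := by
      ext x
      by_cases hx : x = a
      · subst hx; simp [hCa, Finsupp.update, Nat.sub_add_cancel ha]
      · simp [hCa, Finsupp.update, Function.update, hx,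
          Finsupp.single_eq_of_ne (Ne.symm hx)]
    have := sum_add_single_card key
    simp only [size, hCs]
    omega
  · have hne : (a :: s) ≠ s := by
      intro he; exact absurd (congrArg List.length he) (by simp)
    have key : d.Cs + Finsupp.single s 1 = d'.Cs + Finsupp.single (a :: s) 1 := by
      ext x
      by_cases hx : x = a :: s
      · subst hx
        simp [hCs, Finsupp.update, Function.update, hne, Nat.sub_add_cancel hpos]
      · by_cases hx2 : x = s
        · subst hx2
          simp [hCs, Finsupp.update, Function.update, (Ne.symm hne), hne]
        · simp [hCs, Finsupp.update, Function.update, hx, hx2,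
            Finsupp.single_eq_of_ne (Ne.symm hx), Finsupp.single_eq_of_ne (Ne.symm hx2)]
    have e1 := sum_add_single_len (f := d.Cs + Finsupp.single s 1) (g := d.Cs) rfl
    have e2 := sum_add_single_len (f := d.Cs + Finsupp.single s 1) (g := d'.Cs) key
    simp only [size, hCa]
    simp only [List.length_cons] at e2
    omega
  · have key1 : d'.Ca = d.Ca + Finsupp.single b k := by
      ext x
      by_cases hx : x = b
      · subst hx; simp [hCa, Finsupp.update, Function.update]
      · simp [hCa, Finsupp.update, Function.update, hx,
          Finsupp.single_eq_of_ne (Ne.symm hx)]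
    have key2 : d.Cs = d'.Cs + Finsupp.single (a :: List.replicate k b) 1 := by
      ext x
      by_cases hx : x = a :: List.replicate k b
      · subst hx
        simp [hCs, Finsupp.update, Function.update, Nat.sub_add_cancel hpos]
      · simp [hCs, Finsupp.update, Function.update, hx,
          Finsupp.single_eq_of_ne (Ne.symm hx)]
    have e1 := sum_add_single_card key1
    have e2 := sum_add_single_len key2
    simp only [size]
    simp only [List.length_cons, List.length_replicate] at e2
    omega

lemma mem_hdSet_of_tl {d d' : Diamond A} {a : A} (h : d' ∈ tl d a) :
    a ∈ hdSet d := by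
  rcases h with ⟨ha, _⟩ | ⟨s, _, hpos, _⟩ | ⟨b, k, _, _, hpos, _⟩
  · exact Or.inl ha
  · exact Or.inr ⟨a :: s, hpos, rfl⟩
  · exact Or.inr ⟨a :: List.replicate k b, hpos, rfl⟩

end Diamond

open Diamond in
lemma sconvF_empty_eq {Q A : Type*} [DecidableEq A] (Tr : Q → A → Q → Prop) :
    ∀ (n : ℕ) (q q' : Q), SConvF Tr Eq n emptyD q q' → q = q' := by
  intro n q q' h
  cases n with
  | zero => exact h.2
  | succ m =>
    rcases h with ⟨_, h⟩ | ⟨hne, _⟩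
    · exact h
    · exact absurd rfl hne

open Diamond in
lemma sconvF_trseq {Q A : Type*} [DecidableEq A] (Tr : Q → A → Q → Prop) :
    ∀ (n : ℕ) (d : Diamond A) (q q' : Q) (s : List A),
      SConvF Tr Eq n d q q' → SeqOf s d → s.length = size d → size d ≤ n →
      TrSeq Tr q s q' := by
  intro n
  induction n with
  | zero =>
    intro d q q' s h hs hlen hle
    have hd : d = emptyD := h.1
    subst hd
    have : s = [] := List.length_eq_zero_iff.mp (by simpa [size_emptyD] using hlen)
    subst this
    exact h.2 ▸ TrSeq.nil q
  | succ m ih =>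
    intro d q q' s h hs hlen hle
    cases hs with
    | nil =>
      have hd : d = emptyD := eq_emptyD_of_size_eq_zero (by simpa using hlen.symm)
      subst hd
      exact (sconvF_empty_eq Tr _ q q' h) ▸ TrSeq.nil q
    | @cons a s' _ d' htl hs' =>
      have hsz := size_tl htl
      rcases h with ⟨hd, _⟩ | ⟨hne, hfwd, _⟩
      · exfalso
        subst hd
        simp [size_emptyD] at hsz
      · obtain ⟨p, htr, hconv⟩ := hfwd a (mem_hdSet_of_tl htl) d' htl
        exact TrSeq.cons htr (ih d' p q' s' hconv hs' (by simp at hlen; omega) (by omega))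

open Diamond in
theorem stmt15 {Q A : Type*} [DecidableEq A] (Tr : Q → A → Q → Prop)
    (qh qc : Q) (d : Diamond A) (h : Conv Tr Eq d qh qc) :
    ∀ s : List A, SeqOf s d → s.length = size d → TrSeq Tr qh s qc := by
  intro s hs hlen
  rcases h with ⟨hd, hq⟩ | ⟨hne, hfwd⟩
  · subst hd
    have : s = [] := List.length_eq_zero_iff.mp (by simpa [size_emptyD] using hlen)
    subst this
    exact hq ▸ TrSeq.nil qh
  · cases hs with
    | nil =>
      exact absurd (eq_emptyD_of_size_eq_zero (by simpa using hlen.symm)) hne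
    | @cons a s' _ d' htl hs' =>
      obtain ⟨p, htr, hconv⟩ := hfwd a (mem_hdSet_of_tl htl) d' htl
      have hsz := size_tl htl
      exact TrSeq.cons htr
        (sconvF_trseq Tr (size d') d' p qc s' hconv hs' (by simp at hlen; omega) le_rfl)
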